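/- Let α_0 > 0 and α_1, ..., α_n ≥ 0 with ∑_j α_j = α_0, p_j = α_j/α_0, and for each k let D_k = ∑_{j≠k} (α_j/α_0 − α_j/(α_0+1)) + ((α_k+1)/(α_0+1) − α_k/α_0) be the L1 change upon observing outcome k. Then the expected L1 divergence E = ∑_k p_k · D_k satisfies E ≤ 2/(1 + α_0). -/

import Mathlib

/-! Observing outcome `k` lowers each other coordinate `j` of the posterior mean by
`α j / (α₀ (α₀ + 1))` and raises coordinate `k` by the same total, so
`D k = 2 (1 - p k) / (α₀ + 1)`. Averaging under `p` gives the exact value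
`E = 2 (1 - ∑ k, p k ^ 2) / (α₀ + 1)`. -/

open Finset

theorem Finset.sum_mul_one_sub_eq_one_sub_sum_sq {ι R : Type*} [CommRing R] (s : Finset ι)
    (p : ι → R) (hp : ∑ i ∈ s, p i = 1) :
    ∑ i ∈ s, p i * (1 - p i) = 1 - ∑ i ∈ s, p i ^ 2 := by
  simp only [mul_sub, mul_one, sum_sub_distrib, hp, sq]

theorem dirichletMean_l1Change_eq {ι : Type*} [Fintype ι] [DecidableEq ι] (α : ι → ℝ)
    {α₀ : ℝ} (hα₀ : α₀ ≠ 0) (hα₀' : α₀ + 1 ≠ 0) (hsum : ∑ j, α j = α₀) (k : ι) :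
    ∑ j ∈ univ.erase k, (α j / α₀ - α j / (α₀ + 1)) + ((α k + 1) / (α₀ + 1) - α k / α₀)
      = 2 / (α₀ + 1) * (1 - α k / α₀) := by
  have hrest : ∑ j ∈ univ.erase k, α j = α₀ - α k := by
    rw [sum_erase_eq_sub (mem_univ k), hsum]
  have hshift : ∑ j ∈ univ.erase k, (α j / α₀ - α j / (α₀ + 1))
      = (∑ j ∈ univ.erase k, α j) * (1 / α₀ - 1 / (α₀ + 1)) := by
    rw [sum_mul]
    exact sum_congr rfl fun j _ => by ring
  rw [hshift, hrest]
  field_simp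
  ring

theorem stmt_1_general (n : ℕ) (α : Fin n → ℝ) (α₀ : ℝ) (hα₀ : 0 < α₀)
    (hsum : ∑ j, α j = α₀)
    (p : Fin n → ℝ) (hp : ∀ j, p j = α j / α₀)
    (D : Fin n → ℝ)
    (hD : ∀ k, D k = ∑ j ∈ Finset.univ.erase k, (α j / α₀ - α j / (α₀ + 1))
        + ((α k + 1) / (α₀ + 1) - α k / α₀)) :
    ∑ k, p k * D k ≤ 2 / (1 + α₀) := by
  have hD' : ∀ k, D k = 2 / (1 + α₀) * (1 - p k) := fun k => by
    rw [hD, dirichletMean_l1Change_eq α hα₀.ne' (by positivity) hsum, hp, add_comm α₀]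
  have hp_sum : ∑ k, p k = 1 := by
    simp only [hp, ← sum_div, hsum, div_self hα₀.ne']
  calc ∑ k, p k * D k = 2 / (1 + α₀) * (1 - ∑ k, p k ^ 2) := by
        simp only [hD', mul_left_comm (p _), ← mul_sum,
          sum_mul_one_sub_eq_one_sub_sum_sq _ _ hp_sum]
    _ ≤ 2 / (1 + α₀) :=
        mul_le_of_le_one_right (by positivity) (sub_le_self _ (sum_nonneg fun k _ => sq_nonneg _))

/-- Expected L1 divergence of the Dirichlet posterior-mean distribution
after one observation is at most `2 / (1 + α₀)`. -/
theorem stmt_1 (n : ℕ) (α : Fin n → ℝ) (α₀ : ℝ) (hα₀ : 0 < α₀)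
    (hnn : ∀ j, 0 ≤ α j) (hsum : ∑ j, α j = α₀)
    (p : Fin n → ℝ) (hp : ∀ j, p j = α j / α₀)
    (D : Fin n → ℝ)
    (hD : ∀ k, D k = ∑ j ∈ Finset.univ.erase k, (α j / α₀ - α j / (α₀ + 1))
        + ((α k + 1) / (α₀ + 1) - α k / α₀)) :
    ∑ k, p k * D k ≤ 2 / (1 + α₀) :=
  stmt_1_general n α α₀ hα₀ hsum p hp D hD
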